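/- arXiv:1801.02693 — 9 statements merged into one kernel-verified Lean document; each statement's English description precedes it below -/
import Mathlib

section
/- Every ℓ-individually stable matching is ℓ-globally stable. -/
open Finset

/-!
Multi-modal stable marriage framework.
The two sides `U` and `W` each consist of `n` agents, both indexed by `Fin n`;
there are `ℓ` layers, indexed by `Fin ℓ`.
`rU u i w` is the rank that agent `u ∈ U` assigns to agent `w ∈ W` in layer `i`
(smaller rank = strictly more preferred), so `w ≻_u^{(i)} w'` iff `rU u i w < rU u i w'`.
Analogously `rW w i u` for agents `w ∈ W` over `U`.
Injectivity of each `rU u i` and `rW w i` makes these strict linear orders.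
A matching is a bijection `M : Fin n ≃ Fin n` from `U` to `W`;
the partner of `u ∈ U` is `M u` and the partner of `w ∈ W` is `M.symm w`.
A pair `(u, w)` is unmatched iff `M u ≠ w`.
-/

/-- `M` is α-pair stable: for every unmatched pair `(u,w)` there is a set `S` of `α` layers
such that in each layer of `S`, `u` prefers `M u` to `w` or `w` prefers `M.symm w` to `u`. -/
def PairStable (n ℓ : ℕ) (rU rW : Fin n → Fin ℓ → Fin n → ℕ)
    (M : Fin n ≃ Fin n) (α : ℕ) : Prop :=
  ∀ u w : Fin n, M u ≠ w →
    ∃ S : Finset (Fin ℓ), S.card = α ∧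
      ∀ i ∈ S, rU u i (M u) < rU u i w ∨ rW w i (M.symm w) < rW w i u

/-- `M` is α-individually stable: for every unmatched pair `(u,w)` there is a set `S` of
`α` layers such that `u` prefers `M u` to `w` in every layer of `S`, or `w` prefers
`M.symm w` to `u` in every layer of `S`. -/
def IndivStable (n ℓ : ℕ) (rU rW : Fin n → Fin ℓ → Fin n → ℕ)
    (M : Fin n ≃ Fin n) (α : ℕ) : Prop :=
  ∀ u w : Fin n, M u ≠ w →
    ∃ S : Finset (Fin ℓ), S.card = α ∧
      ((∀ i ∈ S, rU u i (M u) < rU u i w) ∨ (∀ i ∈ S, rW w i (M.symm w) < rW w i u))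

/-- `M` is stable in layer `i`: no unmatched pair `(u,w)` with `w ≻_u^{(i)} M u`
and `u ≻_w^{(i)} M.symm w`. -/
def StableInLayer (n ℓ : ℕ) (rU rW : Fin n → Fin ℓ → Fin n → ℕ)
    (M : Fin n ≃ Fin n) (i : Fin ℓ) : Prop :=
  ¬ ∃ u w : Fin n, M u ≠ w ∧ rU u i w < rU u i (M u) ∧ rW w i u < rW w i (M.symm w)

/-- `M` is α-globally stable: there is a set of `α` layers in each of which `M` is stable. -/
def GlobStable (n ℓ : ℕ) (rU rW : Fin n → Fin ℓ → Fin n → ℕ)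
    (M : Fin n ≃ Fin n) (α : ℕ) : Prop :=
  ∃ S : Finset (Fin ℓ), S.card = α ∧ ∀ i ∈ S, StableInLayer n ℓ rU rW M i

/-- The unmatched pair `(u,w)` is β-blocking `M`: there is a set `S` of `β` layers such that
`(u,w)` blocks `M` in every layer of `S`. -/
def Blocking (n ℓ : ℕ) (rU rW : Fin n → Fin ℓ → Fin n → ℕ)
    (M : Fin n ≃ Fin n) (β : ℕ) (u w : Fin n) : Prop :=
  ∃ S : Finset (Fin ℓ), S.card = β ∧
    ∀ i ∈ S, rU u i w < rU u i (M u) ∧ rW w i u < rW w i (M.symm w)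


/-- Every ℓ-individually stable matching is ℓ-globally stable. -/
theorem indivStable_ell_imp_globStable_ell (n ℓ : ℕ) (hn : 1 ≤ n) (hℓ : 1 ≤ ℓ)
    (rU rW : Fin n → Fin ℓ → Fin n → ℕ)
    (hrU : ∀ u i, Function.Injective (rU u i))
    (hrW : ∀ w i, Function.Injective (rW w i))
    (M : Fin n ≃ Fin n)
    (hM : IndivStable n ℓ rU rW M ℓ) :
    GlobStable n ℓ rU rW M ℓ := by
  refine ⟨Finset.univ, by simp, fun i _ => ?_⟩
  intro hb
  obtain ⟨u, w, hne, hu, hw⟩ := hb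
  obtain ⟨S, hS, h⟩ := hM u w hne
  have hSuniv : S = Finset.univ := Finset.eq_univ_of_card S (by simp [hS])
  rcases h with h | h
  · exact absurd hu (not_lt.2 (le_of_lt (h i (by simp [hSuniv]))))
  · exact absurd hw (not_lt.2 (le_of_lt (h i (by simp [hSuniv]))))
end

section
/- Every ℓ-globally stable matching is ⌈ℓ/2⌉-individually stable. -/
open Finset

/-- Every ℓ-globally stable matching is ⌈ℓ/2⌉-individually stable.
(In ℕ, ⌈ℓ/2⌉ = (ℓ + 1) / 2.) -/
theorem globStable_ell_imp_indivStable_half (n ℓ : ℕ) (hn : 1 ≤ n) (hℓ : 1 ≤ ℓ)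
    (rU rW : Fin n → Fin ℓ → Fin n → ℕ)
    (hrU : ∀ u i, Function.Injective (rU u i))
    (hrW : ∀ w i, Function.Injective (rW w i))
    (M : Fin n ≃ Fin n)
    (hM : GlobStable n ℓ rU rW M ℓ) :
    IndivStable n ℓ rU rW M ((ℓ + 1) / 2) := by
  intro u w huw
  obtain ⟨S, hScard, hS⟩ := hM
  have hSuniv : S = Finset.univ := Finset.eq_univ_of_card _ (by simpa using hScard)
  have hall : ∀ i : Fin ℓ, StableInLayer n ℓ rU rW M i := by
    intro i; exact hS i (hSuniv ▸ Finset.mem_univ i)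
  have hwu : M.symm w ≠ u := fun h => huw (by rw [← h]; simp)
  -- key dichotomy per layer
  have key : ∀ i : Fin ℓ, rU u i (M u) < rU u i w ∨ rW w i (M.symm w) < rW w i u := by
    intro i
    have hne1 : rU u i (M u) ≠ rU u i w := fun h => huw (hrU u i h)
    have hne2 : rW w i (M.symm w) ≠ rW w i u := fun h => hwu (hrW w i h)
    rcases lt_or_gt_of_ne hne1 with h1 | h1
    · exact Or.inl h1
    · rcases lt_or_gt_of_ne hne2 with h2 | h2
      · exact Or.inr h2
      · exact absurd ⟨u, w, huw, h1, h2⟩ (hall i)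
  set A : Finset (Fin ℓ) := Finset.univ.filter (fun i => rU u i (M u) < rU u i w) with hA
  have hcards : A.card + Aᶜ.card = ℓ := by
    rw [Finset.card_add_card_compl]; simp
  have hmax : (ℓ + 1) / 2 ≤ A.card ∨ (ℓ + 1) / 2 ≤ Aᶜ.card := by omega
  rcases hmax with h | h
  · obtain ⟨T, hTsub, hTcard⟩ := Finset.exists_subset_card_eq h
    refine ⟨T, hTcard, Or.inl fun i hi => ?_⟩
    have := hTsub hi
    simp only [hA, Finset.mem_filter] at this
    exact this.2
  · obtain ⟨T, hTsub, hTcard⟩ := Finset.exists_subset_card_eq h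
    refine ⟨T, hTcard, Or.inr fun i hi => ?_⟩
    have hi' := hTsub hi
    simp only [hA, Finset.mem_compl, Finset.mem_filter, Finset.mem_univ, true_and] at hi'
    exact (key i).resolve_left hi'
end

section
/- Suppose the agents of U have single-layered preferences. Then for every integer α with 1 ≤ α ≤ ℓ, a matching M is α-pair stable if and only if it is α-individually stable. -/
open Finset

/-- If the agents of U have single-layered preferences (each u ∈ U has the
same order in all layers), then for every α with 1 ≤ α ≤ ℓ, a matching M is α-pair
stable iff it is α-individually stable. -/
theorem single_layered_pairStable_iff_indivStable (n ℓ : ℕ) (hn : 1 ≤ n) (hℓ : 1 ≤ ℓ)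
    (rU rW : Fin n → Fin ℓ → Fin n → ℕ)
    (hrU : ∀ u i, Function.Injective (rU u i))
    (hrW : ∀ w i, Function.Injective (rW w i))
    (hSL : ∀ (u : Fin n) (i j : Fin ℓ) (w w' : Fin n),
      rU u i w < rU u i w' ↔ rU u j w < rU u j w')
    (M : Fin n ≃ Fin n) (α : ℕ) (hα1 : 1 ≤ α) (hαℓ : α ≤ ℓ) :
    PairStable n ℓ rU rW M α ↔ IndivStable n ℓ rU rW M α := by
  constructor
  · intro hP u w huw
    obtain ⟨S, hS, hdisj⟩ := hP u w huw
    have hne : ∀ i : Fin ℓ, rU u i (M u) ≠ rU u i w := fun i h => huw (hrU u i h)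
    by_cases hpref : ∀ i : Fin ℓ, rU u i (M u) < rU u i w
    · exact ⟨S, hS, Or.inl fun i _ => hpref i⟩
    · push_neg at hpref
      obtain ⟨j, hj⟩ := hpref
      have hall : ∀ i : Fin ℓ, rU u i w < rU u i (M u) := fun i =>
        (hSL u j i w (M u)).mp (lt_of_le_of_ne hj (Ne.symm (hne j)))
      refine ⟨S, hS, Or.inr fun i hi => ?_⟩
      rcases hdisj i hi with h | h
      · exact absurd h (not_lt_of_gt (hall i))
      · exact h
  · intro hI u w huw
    obtain ⟨S, hS, h⟩ := hI u w huw
    exact ⟨S, hS, fun i hi => h.elim (fun h => Or.inl (h i hi)) (fun h => Or.inr (h i hi))⟩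
end

section
/- Suppose preferences are uniform in each layer and let 1 ≤ α ≤ ℓ. Define a directed graph G on vertex set U with an arc (u,u') whenever u ≻_W^{(i)} u' holds in at least ℓ−α+1 layers i, and a directed graph H on vertex set W with an arc (w,w') whenever w ≻_U^{(i)} w' holds in at least ℓ−α+1 layers i. Then a matching M is α-individually stable if and only if both of the following hold: (1) for all u,u' ∈ U, if (u,u') is an arc of G then (M(u'),M(u)) is not an arc of H; and (2) for all w,w' ∈ W, if (w,w') is an arc of H then (M⁻¹(w'),M⁻¹(w)) is not an arc of G, where M⁻¹(w) denotes the agent of U matched with w. -/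
open Finset

/-!
Uniform multi-modal stable marriage framework: in each layer, all agents of U share the
same strict order over W and all agents of W share the same strict order over U.
pU i w is the rank of w ∈ W in the common order of the U-agents in layer i
(smaller rank = more preferred), so w ≻_U^{(i)} w' iff pU i w < pU i w'.
pW i u is the rank of u ∈ U in the common order of the W-agents in layer i.
A matching is a bijection M : Fin n ≃ Fin n from U to W.

In each layer two distinct agents are ranked one way or the other, so the layers in which `a`
beats `b` and those in which `b` beats `a` partition the `ℓ` layers. Hence `a` beats `b` in some
`α` layers exactly when `b` beats `a` in fewer than `ℓ - α + 1` layers, i.e. when `(b, a)` is not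
an arc. An unmatched pair `{u, w}` is therefore blocking exactly when `(w, M u)` is an arc of `H`
and `(u, M⁻¹ w)` is an arc of `G`; substituting `w = M u'` gives condition (1), and condition (2)
is the same condition read through `M⁻¹`.
-/

/-- M is α-individually stable (for uniform preferences). -/
def UIndivStable (n ℓ : ℕ) (pU pW : Fin ℓ → Fin n → ℕ)
    (M : Fin n ≃ Fin n) (α : ℕ) : Prop :=
  ∀ u w : Fin n, M u ≠ w →
    ∃ S : Finset (Fin ℓ), S.card = α ∧
      ((∀ i ∈ S, pU i (M u) < pU i w) ∨ (∀ i ∈ S, pW i (M.symm w) < pW i u))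

/-- Arc (u, u') of the digraph G on U: the W-agents prefer u to u' in at least
ℓ − α + 1 layers. -/
def ArcG (n ℓ α : ℕ) (pW : Fin ℓ → Fin n → ℕ) (u u' : Fin n) : Prop :=
  ℓ - α + 1 ≤ (Finset.univ.filter fun i : Fin ℓ => pW i u < pW i u').card

/-- Arc (w, w') of the digraph H on W: the U-agents prefer w to w' in at least
ℓ − α + 1 layers. -/
def ArcH (n ℓ α : ℕ) (pU : Fin ℓ → Fin n → ℕ) (w w' : Fin n) : Prop :=
  ℓ - α + 1 ≤ (Finset.univ.filter fun i : Fin ℓ => pU i w < pU i w').card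

section Counting

variable {ι : Type*} [Fintype ι]

theorem exists_card_eq_forall_iff_le_card_filter (P : ι → Prop) [DecidablePred P] (α : ℕ) :
    (∃ S : Finset ι, S.card = α ∧ ∀ i ∈ S, P i) ↔ α ≤ (univ.filter P).card := by
  constructor
  · rintro ⟨S, rfl, hP⟩
    exact card_le_card fun i hi => mem_filter.2 ⟨mem_univ i, hP i hi⟩
  · intro h
    obtain ⟨S, hS, hcard⟩ := exists_subset_card_eq h
    exact ⟨S, hcard, fun i hi => (mem_filter.1 (hS hi)).2⟩

theorem card_filter_lt_add_card_filter_gt {κ β : Type*} [LinearOrder β] (g : ι → κ → β)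
    {a b : κ} (hab : ∀ i, g i a ≠ g i b) :
    (univ.filter fun i => g i a < g i b).card + (univ.filter fun i => g i b < g i a).card =
      Fintype.card ι := by
  have not_lt_iff_gt : (univ.filter fun i => ¬ g i a < g i b) =
      univ.filter fun i => g i b < g i a :=
    filter_congr fun i _ => ⟨fun h => (hab i).symm.lt_of_le (not_lt.1 h), not_lt_of_gt⟩
  rw [← not_lt_iff_gt, card_filter_add_card_filter_not, card_univ]

end Counting

theorem not_arcG_self {n ℓ α : ℕ} (g : Fin ℓ → Fin n → ℕ) (a : Fin n) : ¬ ArcG n ℓ α g a a := by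
  simp [ArcG]

theorem exists_card_eq_forall_lt_iff_not_arcG {n ℓ α : ℕ} (hαℓ : α ≤ ℓ)
    (g : Fin ℓ → Fin n → ℕ) (hg : ∀ i, Function.Injective (g i)) {a b : Fin n} (hab : a ≠ b) :
    (∃ S : Finset (Fin ℓ), S.card = α ∧ ∀ i ∈ S, g i a < g i b) ↔ ¬ ArcG n ℓ α g b a := by
  have hpartition := card_filter_lt_add_card_filter_gt g fun i h => hab (hg i h)
  rw [exists_card_eq_forall_iff_le_card_filter, ArcG]
  rw [Fintype.card_fin] at hpartition
  omega

theorem uIndivStable_iff_forall_arcG_not_arcH {n ℓ α : ℕ} (hαℓ : α ≤ ℓ)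
    {pU pW : Fin ℓ → Fin n → ℕ} (hpU : ∀ i, Function.Injective (pU i))
    (hpW : ∀ i, Function.Injective (pW i)) (M : Fin n ≃ Fin n) :
    UIndivStable n ℓ pU pW M α ↔
      ∀ u u' : Fin n, ArcG n ℓ α pW u u' → ¬ ArcH n ℓ α pU (M u') (M u) := by
  have not_blocking : ∀ u w, M u ≠ w →
      ((∃ S : Finset (Fin ℓ), S.card = α ∧
          ((∀ i ∈ S, pU i (M u) < pU i w) ∨ (∀ i ∈ S, pW i (M.symm w) < pW i u))) ↔
        ¬ (ArcH n ℓ α pU w (M u) ∧ ArcG n ℓ α pW u (M.symm w))) := by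
    intro u w huw
    have hwu : M.symm w ≠ u := fun h => huw (by rw [← h, M.apply_symm_apply])
    simp only [and_or_left, exists_or, not_and_or]
    exact or_congr (exists_card_eq_forall_lt_iff_not_arcG hαℓ pU hpU huw)
      (exists_card_eq_forall_lt_iff_not_arcG hαℓ pW hpW hwu)
  constructor
  · intro hstable u u' hG hH
    have hne : M u ≠ M u' := fun h => not_arcG_self pW u' (by rwa [M.injective h] at hG)
    exact (not_blocking u _ hne).1 (hstable u _ hne) ⟨hH, by simpa using hG⟩
  · intro hG u w huw
    exact (not_blocking u w huw).2 fun ⟨hH, hG'⟩ => hG u _ hG' (by simpa using hH)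

theorem uniform_indivStable_iff_graphs_general (n ℓ : ℕ)
    (α : ℕ) (hαℓ : α ≤ ℓ)
    (pU pW : Fin ℓ → Fin n → ℕ)
    (hpU : ∀ i, Function.Injective (pU i))
    (hpW : ∀ i, Function.Injective (pW i))
    (M : Fin n ≃ Fin n) :
    UIndivStable n ℓ pU pW M α ↔
      ((∀ u u' : Fin n, ArcG n ℓ α pW u u' → ¬ ArcH n ℓ α pU (M u') (M u)) ∧
       (∀ w w' : Fin n, ArcH n ℓ α pU w w' → ¬ ArcG n ℓ α pW (M.symm w') (M.symm w))) := by
  rw [uIndivStable_iff_forall_arcG_not_arcH hαℓ hpU hpW M]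
  refine ⟨fun h => ⟨h, fun w w' hH hG => h _ _ hG (by simpa using hH)⟩, And.left⟩

/-- For uniform preferences and 1 ≤ α ≤ ℓ, a matching M is α-individually
stable iff (1) for all u,u' ∈ U with an arc (u,u') in G, (M u', M u) is not an arc of H,
and (2) for all w,w' ∈ W with an arc (w,w') in H, (M⁻¹ w', M⁻¹ w) is not an arc of G. -/
theorem uniform_indivStable_iff_graphs (n ℓ : ℕ) (hn : 1 ≤ n) (hℓ : 1 ≤ ℓ)
    (α : ℕ) (hα1 : 1 ≤ α) (hαℓ : α ≤ ℓ)
    (pU pW : Fin ℓ → Fin n → ℕ)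
    (hpU : ∀ i, Function.Injective (pU i))
    (hpW : ∀ i, Function.Injective (pW i))
    (M : Fin n ≃ Fin n) :
    UIndivStable n ℓ pU pW M α ↔
      ((∀ u u' : Fin n, ArcG n ℓ α pW u u' → ¬ ArcH n ℓ α pU (M u') (M u)) ∧
       (∀ w w' : Fin n, ArcH n ℓ α pU w w' → ¬ ArcG n ℓ α pW (M.symm w') (M.symm w))) :=
  uniform_indivStable_iff_graphs_general n ℓ α hαℓ pU pW hpU hpW M
end

section
/- Let G be a loopless asymmetric directed graph on a set U of n vertices and H a loopless asymmetric directed graph on a set W of n vertices (U and W disjoint), each with exactly m ≥ 1 arcs. Then there exist ℓ = 2m layers of preferences, uniform in each layer, such that for all distinct u,u' ∈ U: (u,u') is an arc of G if and only if u ≻_W^{(i)} u' holds in at least m+1 layers i; and for all distinct w,w' ∈ W: (w,w') is an arc of H if and only if w ≻_U^{(i)} w' holds in at least m+1 layers i. (That is, setting α = m = ℓ/2, the digraphs induced from the preferences via the threshold ℓ−α+1 = m+1 are exactly G and H.) -/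
open Finset

def mcR0 {n : ℕ} (a b x : Fin n) : ℕ :=
  if x = a then 0 else if x = b then 1 else x.val + 2

def mcR1 {n : ℕ} (a b x : Fin n) : ℕ :=
  if x = a then n else if x = b then n + 1 else n - 1 - x.val

lemma mcR0_inj {n : ℕ} (a b : Fin n) : Function.Injective (mcR0 a b) := by
  intro x y h
  have hx := x.isLt; have hy := y.isLt
  unfold mcR0 at h
  apply Fin.ext
  split_ifs at h <;> simp only [Fin.ext_iff] at * <;> omega

lemma mcR1_inj {n : ℕ} (a b : Fin n) : Function.Injective (mcR1 a b) := by
  intro x y h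
  have hx := x.isLt; have hy := y.isLt
  unfold mcR1 at h
  apply Fin.ext
  split_ifs at h <;> simp only [Fin.ext_iff] at * <;> omega

lemma mcInner {n : ℕ} (a b u u' : Fin n) (hab : a ≠ b) (huu : u ≠ u') :
    ((if mcR0 a b u < mcR0 a b u' then 1 else 0) +
     (if mcR1 a b u < mcR1 a b u' then 1 else 0) : ℕ)
    = (if (u, u') = (a, b) then 1 else 0) + (if (u', u) = (a, b) then 0 else 1) := by
  have hu := u.isLt; have hu' := u'.isLt; have ha := a.isLt; have hb := b.isLt
  unfold mcR0 mcR1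
  simp only [Prod.mk.injEq]
  split_ifs <;> simp only [Fin.ext_iff, ne_eq, not_and, not_lt] at * <;> omega

lemma mcgarvey_one (n m : ℕ) (hm : 1 ≤ m) (G : Finset (Fin n × Fin n))
    (hloop : ∀ p ∈ G, p.1 ≠ p.2)
    (hasym : ∀ u u' : Fin n, (u, u') ∈ G → (u', u) ∉ G)
    (hcard : G.card = m) :
    ∃ p : Fin (2 * m) → Fin n → ℕ,
      (∀ i, Function.Injective (p i)) ∧
      (∀ u u' : Fin n, u ≠ u' →
        ((u, u') ∈ G ↔
          m + 1 ≤ (Finset.univ.filter fun i : Fin (2 * m) => p i u < p i u').card)) := by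
  -- enumerate arcs
  let eqv : Fin m ≃ {x // x ∈ G} := (finCongr hcard.symm).trans G.equivFin.symm
  let arc : Fin m → Fin n × Fin n := fun k => (eqv k).1
  have harc : ∀ k, arc k ∈ G := fun k => (eqv k).2
  let E : Fin m × Fin 2 ≃ Fin (2 * m) := finProdFinEquiv.trans (finCongr (mul_comm m 2))
  let layer : Fin m × Fin 2 → Fin n → ℕ := fun q x =>
    if q.2 = 0 then mcR0 (arc q.1).1 (arc q.1).2 x else mcR1 (arc q.1).1 (arc q.1).2 x
  refine ⟨fun i => layer (E.symm i), fun i => ?_, fun u u' huu => ?_⟩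
  · dsimp only [layer]
    split_ifs
    · exact mcR0_inj _ _
    · exact mcR1_inj _ _
  · -- compute the count
    have hcount : (Finset.univ.filter fun i : Fin (2 * m) =>
        layer (E.symm i) u < layer (E.symm i) u').card
        = ∑ k : Fin m, ((if (u, u') = arc k then 1 else 0) +
            (if (u', u) = arc k then 0 else 1)) := by
      rw [Finset.card_filter]
      rw [← Equiv.sum_comp E (fun i => if layer (E.symm i) u < layer (E.symm i) u' then (1:ℕ) else 0)]
      simp only [Equiv.symm_apply_apply]
      rw [Fintype.sum_prod_type]
      refine Finset.sum_congr rfl fun k _ => ?_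
      rw [Fin.sum_univ_two]
      have h0 : layer (k, 0) = mcR0 (arc k).1 (arc k).2 := by simp [layer]
      have h1 : layer (k, (1 : Fin 2)) = mcR1 (arc k).1 (arc k).2 := by simp [layer]
      rw [h0, h1]
      exact mcInner _ _ _ _ (hloop _ (harc k)) huu
    rw [hcount, Finset.sum_add_distrib]
    have hS1 : (∑ k : Fin m, if (u, u') = arc k then (1:ℕ) else 0)
        = if (u, u') ∈ G then 1 else 0 := by
      rw [← Equiv.sum_comp eqv.symm
        (fun k => if (u, u') = arc k then (1:ℕ) else 0)]
      have : ∀ g : {x // x ∈ G}, arc (eqv.symm g) = g.1 := by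
        intro g; simp [arc]
      simp only [this]
      rw [Finset.sum_coe_sort G (fun g => if (u,u') = g then (1:ℕ) else 0)]
      exact Finset.sum_ite_eq G (u, u') (fun _ => 1)
    have hS2 : (∑ k : Fin m, if (u', u) = arc k then (0:ℕ) else 1)
        + (if (u', u) ∈ G then 1 else 0) = m := by
      have hS2' : (∑ k : Fin m, if (u', u) = arc k then (1:ℕ) else 0)
          = if (u', u) ∈ G then 1 else 0 := by
        rw [← Equiv.sum_comp eqv.symm
          (fun k => if (u', u) = arc k then (1:ℕ) else 0)]
        have : ∀ g : {x // x ∈ G}, arc (eqv.symm g) = g.1 := by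
          intro g; simp [arc]
        simp only [this]
        rw [Finset.sum_coe_sort G (fun g => if (u',u) = g then (1:ℕ) else 0)]
        exact Finset.sum_ite_eq G (u', u) (fun _ => 1)
      rw [← hS2', ← Finset.sum_add_distrib]
      have : ∀ k : Fin m, ((if (u', u) = arc k then (0:ℕ) else 1)
          + (if (u', u) = arc k then (1:ℕ) else 0)) = 1 := by
        intro k; split_ifs <;> rfl
      simp [this]
    rw [hS1]
    have hb : (if (u', u) ∈ G then (1:ℕ) else 0) ≤ 1 := by split_ifs <;> omega
    constructor
    · intro hmem
      have hnmem : (u', u) ∉ G := hasym _ _ hmem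
      rw [if_pos hmem]
      rw [if_neg hnmem] at hS2
      omega
    · intro hle
      by_contra hnmem
      rw [if_neg hnmem] at hle
      omega

/-- McGarvey-style construction. Let G be a loopless asymmetric digraph on
U = Fin n and H a loopless asymmetric digraph on W = Fin n, each with exactly m ≥ 1 arcs.
Then there are ℓ = 2m layers of uniform preferences such that for all distinct u,u',
(u,u') ∈ G iff the W-agents prefer u to u' in at least m + 1 = ℓ − α + 1 (α = m) layers,
and analogously for H with the U-agents' preferences. -/
theorem mcgarvey_realizes_digraphs (n m : ℕ) (hn : 1 ≤ n) (hm : 1 ≤ m)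
    (G H : Finset (Fin n × Fin n))
    (hGloop : ∀ p ∈ G, p.1 ≠ p.2)
    (hGasym : ∀ u u' : Fin n, (u, u') ∈ G → (u', u) ∉ G)
    (hHloop : ∀ p ∈ H, p.1 ≠ p.2)
    (hHasym : ∀ w w' : Fin n, (w, w') ∈ H → (w', w) ∉ H)
    (hGcard : G.card = m) (hHcard : H.card = m) :
    ∃ pU pW : Fin (2 * m) → Fin n → ℕ,
      (∀ i, Function.Injective (pU i)) ∧
      (∀ i, Function.Injective (pW i)) ∧
      (∀ u u' : Fin n, u ≠ u' →
        ((u, u') ∈ G ↔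
          m + 1 ≤ (Finset.univ.filter fun i : Fin (2 * m) => pW i u < pW i u').card)) ∧
      (∀ w w' : Fin n, w ≠ w' →
        ((w, w') ∈ H ↔
          m + 1 ≤ (Finset.univ.filter fun i : Fin (2 * m) => pU i w < pU i w').card)) := by
  obtain ⟨pW, hWinj, hWiff⟩ := mcgarvey_one n m hm G hGloop hGasym hGcard
  obtain ⟨pU, hUinj, hUiff⟩ := mcgarvey_one n m hm H hHloop hHasym hHcard
  exact ⟨pU, pW, hUinj, hWinj, hWiff, hUiff⟩
end

section
/- Suppose preferences are uniform in each layer and α ≥ ℓ/2 + 1. Define a directed graph G on vertex set U with an arc (u,u') whenever u ≻_W^{(i)} u' holds in at least ℓ−α+1 layers i, and a directed graph H on vertex set W with an arc (w,w') whenever w ≻_U^{(i)} w' holds in at least ℓ−α+1 layers i. Then: (a) for every two distinct u,u' ∈ U at least one of (u,u') and (u',u) is an arc of G, and likewise for H; and (b) if moreover G and H are tournaments (for every two distinct vertices exactly one of the two possible arcs is present), then a matching M is α-individually stable if and only if M is an isomorphism from G to H, i.e., for all distinct u,u' ∈ U, (u,u') is an arc of G if and only if (M(u),M(u')) is an arc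 of H. -/
open Finset

lemma pref_card_sum {n ℓ : ℕ} (p : Fin ℓ → Fin n → ℕ)
    (hp : ∀ i, Function.Injective (p i)) (a b : Fin n) (hab : a ≠ b) :
    (Finset.univ.filter fun i : Fin ℓ => p i a < p i b).card +
    (Finset.univ.filter fun i : Fin ℓ => p i b < p i a).card = ℓ := by
  have h : (Finset.univ.filter fun i : Fin ℓ => p i b < p i a)
      = Finset.univ.filter fun i : Fin ℓ => ¬ (p i a < p i b) := by
    apply Finset.filter_congr
    intro i _
    have hne : p i a ≠ p i b := fun h => hab (hp i h)
    simp only [not_lt, eq_iff_iff]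
    exact ⟨le_of_lt, fun h' => lt_of_le_of_ne h' (Ne.symm hne)⟩
  rw [h, Finset.card_filter_add_card_filter_not, Finset.card_univ, Fintype.card_fin]

lemma subset_filter_card {ℓ α : ℕ} {S : Finset (Fin ℓ)} {P : Fin ℓ → Prop} [DecidablePred P]
    (hS : S.card = α) (h : ∀ i ∈ S, P i) :
    α ≤ (Finset.univ.filter P).card := by
  rw [← hS]
  exact Finset.card_le_card (fun i hi => Finset.mem_filter.mpr ⟨Finset.mem_univ i, h i hi⟩)


/-- For uniform preferences and α ≥ ℓ/2 + 1 (i.e. 2α ≥ ℓ + 2):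
(a) for every two distinct u,u' ∈ U at least one of (u,u'), (u',u) is an arc of G, and
likewise for H; (b) if moreover G and H are tournaments (exactly one arc between any two
distinct vertices), then a matching M is α-individually stable iff M is an isomorphism
from G to H. -/
theorem uniform_indivStable_iff_tournament_isomorphism (n ℓ : ℕ) (hn : 1 ≤ n) (hℓ : 1 ≤ ℓ)
    (α : ℕ) (hαℓ : α ≤ ℓ) (hα : ℓ + 2 ≤ 2 * α)
    (pU pW : Fin ℓ → Fin n → ℕ)
    (hpU : ∀ i, Function.Injective (pU i))
    (hpW : ∀ i, Function.Injective (pW i)) :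
    ((∀ u u' : Fin n, u ≠ u' → (ArcG n ℓ α pW u u' ∨ ArcG n ℓ α pW u' u)) ∧
     (∀ w w' : Fin n, w ≠ w' → (ArcH n ℓ α pU w w' ∨ ArcH n ℓ α pU w' w))) ∧
    ((∀ u u' : Fin n, u ≠ u' → (ArcG n ℓ α pW u u' ↔ ¬ ArcG n ℓ α pW u' u)) →
     (∀ w w' : Fin n, w ≠ w' → (ArcH n ℓ α pU w w' ↔ ¬ ArcH n ℓ α pU w' w)) →
     ∀ M : Fin n ≃ Fin n,
       (UIndivStable n ℓ pU pW M α ↔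
         ∀ u u' : Fin n, u ≠ u' →
           (ArcG n ℓ α pW u u' ↔ ArcH n ℓ α pU (M u) (M u')))) := by
  have hα' : ℓ - α + 1 ≤ α := by omega
  have partG : ∀ u u' : Fin n, u ≠ u' →
      (Finset.univ.filter fun i : Fin ℓ => pW i u < pW i u').card +
      (Finset.univ.filter fun i : Fin ℓ => pW i u' < pW i u).card = ℓ :=
    fun u u' h => pref_card_sum pW hpW u u' h
  have partH : ∀ w w' : Fin n, w ≠ w' →
      (Finset.univ.filter fun i : Fin ℓ => pU i w < pU i w').card +
      (Finset.univ.filter fun i : Fin ℓ => pU i w' < pU i w).card = ℓ :=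
    fun w w' h => pref_card_sum pU hpU w w' h
  refine ⟨⟨fun u u' h => ?_, fun w w' h => ?_⟩, fun hG hH M => ?_⟩
  · have := partG u u' h
    unfold ArcG
    omega
  · have := partH w w' h
    unfold ArcH
    omega
  constructor
  · -- stable → isomorphism
    intro hst u u' huu'
    have hM : M u ≠ M u' := fun e => huu' (M.injective e)
    obtain ⟨S, hScard, hS⟩ := hst u (M u') hM
    obtain ⟨S', hScard', hS'⟩ := hst u' (M u) hM.symm
    rw [M.symm_apply_apply] at hS hS'
    have D1 : ArcH n ℓ α pU (M u) (M u') ∨ ¬ ArcG n ℓ α pW u u' := by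
      rcases hS with h1 | h1
      · left
        unfold ArcH
        have := subset_filter_card hScard h1
        omega
      · right
        rw [hG u u' huu']
        push_neg
        unfold ArcG
        have := subset_filter_card hScard h1
        omega
    have D2 : ¬ ArcH n ℓ α pU (M u) (M u') ∨ ArcG n ℓ α pW u u' := by
      rcases hS' with h1 | h1
      · left
        refine (hH (M u') (M u) hM.symm).mp ?_
        unfold ArcH
        have := subset_filter_card hScard' h1
        omega
      · right
        unfold ArcG
        have := subset_filter_card hScard' h1
        omega
    constructor
    · intro hg
      rcases D1 with h | h
      · exact h
      · exact absurd hg h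
    · intro hh
      rcases D2 with h | h
      · exact absurd hh h
      · exact h
  · -- isomorphism → stable
    intro hiso u w hMuw
    set u' := M.symm w with hu'
    have hMu' : M u' = w := M.apply_symm_apply w
    have huu' : u ≠ u' := fun e => hMuw (by rw [e, hMu'])
    by_cases hg : ArcG n ℓ α pW u u'
    · -- arc in G : use H side
      have hh : ArcH n ℓ α pU (M u) w := by
        have := (hiso u u' huu').mp hg
        rwa [hMu'] at this
      have hnrev : ¬ ArcH n ℓ α pU w (M u) := by
        intro hc
        exact (hH w (M u) (Ne.symm hMuw)).mp hc hh
      have hcard : α ≤ (Finset.univ.filter fun i : Fin ℓ => pU i (M u) < pU i w).card := by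
        unfold ArcH at hnrev
        have := partH (M u) w hMuw
        omega
      obtain ⟨S, hSsub, hScard⟩ := Finset.exists_subset_card_eq hcard
      exact ⟨S, hScard, Or.inl fun i hi => (Finset.mem_filter.mp (hSsub hi)).2⟩
    · -- no arc u → u' in G : many layers with u' preferred
      have hcard : α ≤ (Finset.univ.filter fun i : Fin ℓ => pW i u' < pW i u).card := by
        unfold ArcG at hg
        have := partG u u' huu'
        omega
      obtain ⟨S, hSsub, hScard⟩ := Finset.exists_subset_card_eq hcard
      exact ⟨S, hScard, Or.inr fun i hi => (Finset.mem_filter.mp (hSsub hi)).2⟩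
end

section
/- There exists an instance with n = 3 agents on each side and ℓ = 3 layers of strict preference lists that admits no 2-pair stable matching (equivalently, for every matching some unmatched pair is 2-blocking). -/
open Finset

def myrU : Fin 3 → Fin 3 → Fin 3 → ℕ := ![![![2, 1, 0], ![0, 1, 2], ![0, 1, 2]], ![![0, 2, 1], ![0, 1, 2], ![1, 2, 0]], ![![0, 1, 2], ![0, 2, 1], ![1, 0, 2]]]
def myrW : Fin 3 → Fin 3 → Fin 3 → ℕ := ![![![2, 1, 0], ![1, 0, 2], ![0, 2, 1]], ![![0, 1, 2], ![0, 1, 2], ![1, 0, 2]], ![![0, 2, 1], ![0, 2, 1], ![1, 0, 2]]]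

lemma myblock : ∀ M : Fin 3 ≃ Fin 3, ∃ u w : Fin 3, M u ≠ w ∧
    ∃ i j : Fin 3, i ≠ j ∧
      (myrU u i w < myrU u i (M u) ∧ myrW w i u < myrW w i (M.symm w)) ∧
      (myrU u j w < myrU u j (M u) ∧ myrW w j u < myrW w j (M.symm w)) := by
  decide

/-- There is an instance with n = 3 agents on each side and ℓ = 3 layers of
strict preference lists that admits no 2-pair stable matching (equivalently, for every
matching some unmatched pair is 2-blocking). -/
theorem exists_instance_no_pairStable_two :
    ∃ rU rW : Fin 3 → Fin 3 → Fin 3 → ℕ,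
      (∀ u i, Function.Injective (rU u i)) ∧
      (∀ w i, Function.Injective (rW w i)) ∧
      (∀ M : Fin 3 ≃ Fin 3, ¬ PairStable 3 3 rU rW M 2) ∧
      (∀ M : Fin 3 ≃ Fin 3, ∃ u w : Fin 3, M u ≠ w ∧ Blocking 3 3 rU rW M 2 u w) := by
  refine ⟨myrU, myrW, by decide, by decide, ?_, ?_⟩
  · intro M hPS
    obtain ⟨u, w, hne, i, j, hij, hi, hj⟩ := myblock M
    obtain ⟨S, hS, hall⟩ := hPS u w hne
    -- S has card 2 among 3 layers; it must contain i or j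
    have : i ∈ S ∨ j ∈ S := by
      by_contra h
      push_neg at h
      have hsub : S ⊆ ({i, j} : Finset (Fin 3))ᶜ := by
        intro x hx
        refine Finset.mem_compl.mpr fun hm => ?_
        rcases Finset.mem_insert.mp hm with h' | h'
        · exact h.1 (h' ▸ hx)
        · exact h.2 ((Finset.mem_singleton.mp h') ▸ hx)
      have hc := Finset.card_le_card hsub
      have h2 : ({i, j} : Finset (Fin 3)).card = 2 := by
        rw [Finset.card_insert_of_notMem (by simp [hij]), Finset.card_singleton]
      rw [Finset.card_compl, h2] at hc
      simp [Fintype.card_fin] at hc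
      omega
    rcases this with h | h
    · rcases hall i h with h' | h'
      · exact absurd hi.1 (by omega)
      · exact absurd hi.2 (by omega)
    · rcases hall j h with h' | h'
      · exact absurd hj.1 (by omega)
      · exact absurd hj.2 (by omega)
  · intro M
    obtain ⟨u, w, hne, i, j, hij, hi, hj⟩ := myblock M
    exact ⟨u, w, hne, {i, j}, by rw [Finset.card_insert_of_notMem (by simp [hij]),
      Finset.card_singleton], by intro k hk; rcases Finset.mem_insert.mp hk with h | h
                                 · exact h ▸ hi
                                 · exact (Finset.mem_singleton.mp h) ▸ hj⟩
end

section
/- There exists an instance with n = 2 agents on each side and ℓ = 2 layers of strict preference lists, together with a matching M, such that M is 2-globally stable (stable in both layers) but not 2-individually stable. (Hence ℓ-global stability does not imply ℓ-individual stability.) -/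
open Finset

/-- There is an instance with n = 2 agents on each side and ℓ = 2 layers of
strict preference lists, together with a matching M, such that M is 2-globally stable
(stable in both layers) but not 2-individually stable. -/
theorem exists_globStable_two_not_indivStable_two :
    ∃ rU rW : Fin 2 → Fin 2 → Fin 2 → ℕ,
      (∀ u i, Function.Injective (rU u i)) ∧
      (∀ w i, Function.Injective (rW w i)) ∧
      ∃ M : Fin 2 ≃ Fin 2,
        (∀ i : Fin 2, StableInLayer 2 2 rU rW M i) ∧
        GlobStable 2 2 rU rW M 2 ∧
        ¬ IndivStable 2 2 rU rW M 2 := by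
  refine ⟨fun u i w => if u = 0 ∧ i = 1 then w.val else 1 - w.val,
    fun w i u => if w = 1 ∧ i = 0 then 1 - u.val else u.val,
    ?_, ?_, Equiv.refl _, ?_, ?_, ?_⟩
  · decide
  · decide
  · unfold StableInLayer; decide
  · unfold GlobStable StableInLayer; decide
  · unfold IndivStable; decide
end

section
/- There exists an instance with n = 3 agents on each side and ℓ = 2 layers of strict preference lists, together with a matching M, such that M is 1-individually stable (and hence 1-pair stable) but not 1-globally stable, i.e., M is not stable in any single layer. (Hence α-individual stability does not imply α-global stability.) -/
open Finset

/-- There is an instance with n = 3 agents on each side and ℓ = 2 layers of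
strict preference lists, together with a matching M, such that M is 1-individually
stable (hence 1-pair stable) but not 1-globally stable, i.e. M is not stable in any
single layer. -/
theorem exists_indivStable_one_not_globStable_one :
    ∃ rU rW : Fin 3 → Fin 2 → Fin 3 → ℕ,
      (∀ u i, Function.Injective (rU u i)) ∧
      (∀ w i, Function.Injective (rW w i)) ∧
      ∃ M : Fin 3 ≃ Fin 3,
        IndivStable 3 2 rU rW M 1 ∧
        PairStable 3 2 rU rW M 1 ∧
        (∀ i : Fin 2, ¬ StableInLayer 3 2 rU rW M i) ∧
        ¬ GlobStable 3 2 rU rW M 1 := by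
  refine ⟨fun u i w => if u.val = 0 ∧ i.val = 0 then (if w.val = 0 then 1 else if w.val = 1 then 0 else 2) else w.val,
         fun w i u => if w.val = 0 ∧ i.val = 1 then (if u.val = 0 then 1 else if u.val = 1 then 0 else 2) else u.val,
         ?_, ?_, Equiv.refl _, ?_, ?_, ?_, ?_⟩ <;> first
    | decide
    | (simp only [IndivStable, PairStable, StableInLayer, GlobStable]; decide)
end
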